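/- (Three-dimensional trace-type estimate between two graphs; the d = 3 case of estimate (s1) in the proof of Lemma 1.) Under the stated assumptions, ∫_B ψ(t₁, t₂, g(t₁,t₂))² d(t₁,t₂) ≤ 2 ∫_B ψ(t₁, t₂, G(t₁,t₂))² d(t₁,t₂) + 2γ ∫_S ‖∇ψ(x)‖² dx. -/

import Mathlib

open MeasureTheory Set Topology Filter

/-- A point of Euclidean three-space given by its three coordinates. -/
noncomputable def pt3 (a b c : ℝ) : EuclideanSpace ℝ (Fin 3) :=
  (WithLp.equiv 2 (Fin 3 → ℝ)).symm ![a, b, c]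

lemma pt3_apply_zero (a b c : ℝ) : pt3 a b c 0 = a := rfl
lemma pt3_apply_one (a b c : ℝ) : pt3 a b c 1 = b := rfl
lemma pt3_apply_two (a b c : ℝ) : pt3 a b c 2 = c := rfl

lemma pt3_smul (a b c : ℝ) : pt3 a b c =
    a • EuclideanSpace.single (0:Fin 3) (1:ℝ) + b • EuclideanSpace.single 1 (1:ℝ)
      + c • EuclideanSpace.single 2 (1:ℝ) := by
  ext i
  fin_cases i <;>
    simp [pt3, EuclideanSpace.single_apply]

lemma continuous_pt3 : Continuous fun q : (ℝ × ℝ) × ℝ => pt3 q.1.1 q.1.2 q.2 := by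
  simp only [pt3_smul]
  fun_prop

noncomputable def e3 : EuclideanSpace ℝ (Fin 3) ≃ᵐ (ℝ × ℝ) × ℝ :=
  (MeasurableEquiv.toLp 2 (Fin 3 → ℝ)).symm.trans <|
    (MeasurableEquiv.piFinSuccAbove (fun _ : Fin 3 => ℝ) 2).trans <|
      ((MeasurableEquiv.refl ℝ).prodCongr MeasurableEquiv.finTwoArrow).trans <|
        MeasurableEquiv.prodComm

lemma e3_apply (x : EuclideanSpace ℝ (Fin 3)) : e3 x = ((x 0, x 1), x 2) := by
  simp [e3, MeasurableEquiv.trans_apply, MeasurableEquiv.prodCongr,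
    MeasurableEquiv.prodComm, MeasurableEquiv.finTwoArrow, MeasurableEquiv.piFinSuccAbove,
    MeasurableEquiv.coe_toLp_symm, Fin.removeNth, Fin.succAbove]
  rfl

lemma e3_mp : MeasurePreserving e3 volume volume := by
  have h1 := EuclideanSpace.volume_preserving_symm_measurableEquiv_toLp (Fin 3)
  have h2 := volume_preserving_piFinSuccAbove (fun _ : Fin 3 => ℝ) 2
  have h3 : MeasurePreserving (Prod.map (id : ℝ → ℝ) (MeasurableEquiv.finTwoArrow (α := ℝ)))
      volume volume := by
    rw [Measure.volume_eq_prod _ _, Measure.volume_eq_prod _ _]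
    exact (MeasurePreserving.id volume).prod (volume_preserving_finTwoArrow ℝ)
  have h4 : MeasurePreserving (Prod.swap : ℝ × (ℝ × ℝ) → (ℝ × ℝ) × ℝ) volume volume := by
    rw [Measure.volume_eq_prod _ _, Measure.volume_eq_prod _ _]
    exact Measure.measurePreserving_swap
  exact h4.comp (h3.comp (h2.comp h1))

lemma e3_mp_symm : MeasurePreserving e3.symm volume volume := e3_mp.symm e3

lemma e3_symm_apply (q : (ℝ × ℝ) × ℝ) : e3.symm q = pt3 q.1.1 q.1.2 q.2 := by
  have h : e3 (pt3 q.1.1 q.1.2 q.2) = q := by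
    rw [e3_apply, pt3_apply_zero, pt3_apply_one, pt3_apply_two]
  conv_lhs => rw [← h]
  rw [MeasurableEquiv.symm_apply_apply]

lemma cs_aux {f : ℝ → ℝ} {a b : ℝ} (hab : a ≤ b) (hf : Continuous f) :
    (∫ s in Ioo a b, f s)^2 ≤ (b - a) * ∫ s in Ioo a b, f s ^ 2 := by
  have h1 : IntegrableOn f (Ioo a b) :=
    (hf.integrableOn_Icc (a := a) (b := b)).mono_set Ioo_subset_Icc_self
  have h2 : IntegrableOn (fun s => f s ^ 2) (Ioo a b) :=
    ((hf.pow 2).integrableOn_Icc (a := a) (b := b)).mono_set Ioo_subset_Icc_self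
  set J := ∫ s in Ioo a b, f s with hJ
  set Q := ∫ s in Ioo a b, f s ^ 2 with hQ
  have hQ0 : 0 ≤ Q := integral_nonneg fun s => sq_nonneg _
  rcases eq_or_lt_of_le hab with rfl | hlt
  · simp [hJ, sub_self]
  · set m := b - a with hm
    have hm0 : 0 < m := sub_pos.2 hlt
    set c := J / m with hc
    have key : 0 ≤ ∫ s in Ioo a b, (f s - c)^2 := integral_nonneg fun s => sq_nonneg _
    have hsub : IntegrableOn (fun s => f s ^ 2 - 2*c*f s) (Ioo a b) :=
      h2.sub (h1.const_mul (2*c))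
    have hconst : IntegrableOn (fun _ : ℝ => c^2) (Ioo a b) :=
      integrableOn_const (by rw [Real.volume_Ioo]; exact ENNReal.ofReal_ne_top)
    have expand : ∫ s in Ioo a b, (f s - c)^2 = Q - 2*c*J + c^2*m := by
      have h3 : ∀ s, (f s - c)^2 = f s ^ 2 - 2*c * f s + c^2 := fun s => by ring
      simp_rw [h3]
      calc ∫ s in Ioo a b, (f s ^2 - 2*c*f s + c^2)
          = (∫ s in Ioo a b, (f s ^2 - 2*c*f s)) + ∫ _ in Ioo a b, (c^2:ℝ) :=
            integral_add hsub hconst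
        _ = ((∫ s in Ioo a b, f s^2) - ∫ s in Ioo a b, 2*c*f s) + c^2*m := by
            rw [integral_sub h2 (h1.const_mul _), setIntegral_const, measureReal_def, Real.volume_Ioo,
              ENNReal.toReal_ofReal hm0.le, smul_eq_mul]
            ring_nf
        _ = Q - 2*c*J + c^2*m := by rw [integral_const_mul]
    rw [expand] at key
    have h4 : Q - 2*(J/m)*J + (J/m)^2*m = Q - J^2/m := by field_simp; ring
    rw [hc, h4] at key
    have := (div_le_iff₀ hm0).mp (by linarith : J^2/m ≤ Q)
    linarith

/-- Three-dimensional trace-type estimate between two graphs (the d = 3 case of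
estimate (s1) in the proof of Lemma 1). -/
theorem trace_type_estimate_between_graphs_dim3
    (γ T₁ T₂ : ℝ) (hγ : 0 < γ) (hT₁ : 0 < T₁) (hT₂ : 0 < T₂)
    (B : Set (ℝ × ℝ)) (hB : B = Icc (0:ℝ) T₁ ×ˢ Icc (0:ℝ) T₂)
    (g G : ℝ × ℝ → ℝ)
    (hg : ContinuousOn g B) (hG : ContinuousOn G B)
    (hgG : ∀ t ∈ B, g t ≤ G t ∧ G t ≤ g t + γ)
    (S : Set (EuclideanSpace ℝ (Fin 3)))
    (hS : S = {x : EuclideanSpace ℝ (Fin 3) |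
        x 0 ∈ Ioo (0:ℝ) T₁ ∧ x 1 ∈ Ioo (0:ℝ) T₂ ∧
        x 2 ∈ Ioo (g (x 0, x 1)) (G (x 0, x 1))})
    (ψ : EuclideanSpace ℝ (Fin 3) → ℝ) (hψ : ContDiff ℝ 1 ψ) :
    (∫ t in B, (ψ (pt3 t.1 t.2 (g t)))^2)
      ≤ 2 * (∫ t in B, (ψ (pt3 t.1 t.2 (G t)))^2)
        + 2 * γ * ∫ x in S, ‖gradient ψ x‖^2 := by
  classical
  have hψd : Differentiable ℝ ψ := hψ.differentiable one_ne_zero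
  set v : EuclideanSpace ℝ (Fin 3) := EuclideanSpace.single 2 (1:ℝ) with hv
  set D : ℝ × ℝ → ℝ → ℝ := fun t s => fderiv ℝ ψ (pt3 t.1 t.2 s) v with hDdef
  have hline : ∀ a b s : ℝ, HasDerivAt (fun s => pt3 a b s) v s := by
    intro a b s
    have hfun : (fun s => pt3 a b s) = fun s => pt3 a b 0 + s • v := by
      funext s
      rw [pt3_smul, pt3_smul]
      simp only [hv, zero_smul, add_zero]
    rw [hfun]
    simpa using ((hasDerivAt_id s).smul_const v).const_add (pt3 a b 0)
  have hDderiv : ∀ (t : ℝ × ℝ) (s : ℝ), HasDerivAt (fun s => ψ (pt3 t.1 t.2 s)) (D t s) s :=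
    fun t s => ((hψd (pt3 t.1 t.2 s)).hasFDerivAt).comp_hasDerivAt s (hline t.1 t.2 s)
  have hDcont : Continuous fun p : (ℝ × ℝ) × ℝ => D p.1 p.2 :=
    ((hψ.continuous_fderiv one_ne_zero).comp continuous_pt3).clm_apply continuous_const
  have hgrad_cont : Continuous (gradient ψ) :=
    (InnerProductSpace.toDual ℝ _).symm.continuous.comp (hψ.continuous_fderiv one_ne_zero)
  have hD_le : ∀ (t : ℝ × ℝ) (s : ℝ),
      (D t s)^2 ≤ ‖gradient ψ (pt3 t.1 t.2 s)‖^2 := by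
    intro t s
    have h1 : D t s = inner ℝ (gradient ψ (pt3 t.1 t.2 s)) v :=
      (InnerProductSpace.toDual_symm_apply (𝕜 := ℝ)).symm
    have h2 : |(inner ℝ (gradient ψ (pt3 t.1 t.2 s)) v : ℝ)|
        ≤ ‖gradient ψ (pt3 t.1 t.2 s)‖ * ‖v‖ := abs_real_inner_le_norm _ _
    have h3 : ‖v‖ = 1 := by simp [hv, EuclideanSpace.norm_single]
    rw [h3, mul_one] at h2
    rw [h1, ← sq_abs]
    exact pow_le_pow_left₀ (abs_nonneg _) h2 2
  -- sets
  set U : Set (ℝ × ℝ) := Ioo 0 T₁ ×ˢ Ioo 0 T₂ with hU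
  have hUopen : IsOpen U := isOpen_Ioo.prod isOpen_Ioo
  have hUB : U ⊆ B := by rw [hB, hU]; exact prod_mono Ioo_subset_Icc_self Ioo_subset_Icc_self
  have hBcompact : IsCompact B := by rw [hB]; exact isCompact_Icc.prod isCompact_Icc
  have hBU_ae : B =ᵐ[volume] U := by
    rw [ae_eq_set]
    constructor
    · have hsub : B \ U ⊆ (({0, T₁} : Set ℝ) ×ˢ (univ : Set ℝ))
          ∪ ((univ : Set ℝ) ×ˢ ({0, T₂} : Set ℝ)) := by
        rintro ⟨x, y⟩ ⟨hxyB, hxyU⟩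
        rw [hB] at hxyB
        rw [hU] at hxyU
        simp only [mem_prod, mem_Icc, mem_Ioo] at hxyB hxyU
        by_cases h1 : 0 < x ∧ x < T₁
        · have h2 : ¬(0 < y ∧ y < T₂) := fun h => hxyU ⟨h1, h⟩
          have hy : y = 0 ∨ y = T₂ := by
            rcases hxyB with ⟨_, hy0, hyT⟩
            rcases lt_or_eq_of_le hy0 with h | h
            · rcases lt_or_eq_of_le hyT with h' | h'
              · exact absurd ⟨h, h'⟩ h2
              · exact Or.inr h'
            · exact Or.inl h.symm
          exact Or.inr ⟨trivial, hy⟩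
        · have hx : x = 0 ∨ x = T₁ := by
            rcases hxyB with ⟨⟨hx0, hxT⟩, _⟩
            rcases lt_or_eq_of_le hx0 with h | h
            · rcases lt_or_eq_of_le hxT with h' | h'
              · exact absurd ⟨h, h'⟩ h1
              · exact Or.inr h'
            · exact Or.inl h.symm
          exact Or.inl ⟨hx, trivial⟩
      refine measure_mono_null hsub ?_
      rw [Measure.volume_eq_prod _ _]
      apply measure_union_null <;> rw [Measure.prod_prod] <;>
        simp [(Set.toFinite ({0, T₁} : Set ℝ)).countable.measure_zero volume,
          (Set.toFinite ({0, T₂} : Set ℝ)).countable.measure_zero volume]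
    · rw [diff_eq_empty.mpr hUB]
      simp
  -- bounds for g and G on B
  obtain ⟨Cg, hCg⟩ := hBcompact.exists_bound_of_continuousOn hg
  obtain ⟨CG, hCG⟩ := hBcompact.exists_bound_of_continuousOn hG
  set C : ℝ := max Cg CG with hC
  have hCgle : Cg ≤ C := le_max_left _ _
  have hCGle : CG ≤ C := le_max_right _ _
  -- the region between the graphs, in product coordinates
  set A : Set ((ℝ × ℝ) × ℝ) := {q | q.1 ∈ U ∧ q.2 ∈ Ioo (g q.1) (G q.1)} with hA
  have hA_open : IsOpen A := by
    rw [isOpen_iff_mem_nhds]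
    rintro ⟨t, s⟩ ⟨htU, hs1, hs2⟩
    have hBt : B ∈ 𝓝 t := Filter.mem_of_superset (hUopen.mem_nhds htU) hUB
    have hgat : ContinuousAt g t := hg.continuousAt hBt
    have hGat : ContinuousAt G t := hG.continuousAt hBt
    have e1 : ∀ᶠ q : (ℝ × ℝ) × ℝ in 𝓝 (t, s), g q.1 < q.2 :=
      (hgat.comp continuousAt_fst).eventually_lt continuousAt_snd hs1
    have e2 : ∀ᶠ q : (ℝ × ℝ) × ℝ in 𝓝 (t, s), q.2 < G q.1 :=
      ContinuousAt.eventually_lt continuousAt_snd (hGat.comp continuousAt_fst) hs2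
    have e0 : ∀ᶠ q : (ℝ × ℝ) × ℝ in 𝓝 (t, s), q.1 ∈ U :=
      continuousAt_fst.preimage_mem_nhds (hUopen.mem_nhds htU)
    have hev : ∀ᶠ q : (ℝ × ℝ) × ℝ in 𝓝 (t, s), q ∈ A := by
      filter_upwards [e0, e1, e2] with q h0 h1 h2
      exact ⟨h0, h1, h2⟩
    exact hev
  have hA_meas : MeasurableSet A := hA_open.measurableSet
  have hpre : ⇑e3.symm ⁻¹' S = A := by
    ext q
    simp only [mem_preimage, e3_symm_apply, hS, mem_setOf_eq, pt3_apply_zero, pt3_apply_one,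
      pt3_apply_two, hA, hU, mem_prod]
    tauto
  -- the gradient-square function
  set F : EuclideanSpace ℝ (Fin 3) → ℝ := fun x => ‖gradient ψ x‖^2 with hF
  have hFcont : Continuous fun q : (ℝ × ℝ) × ℝ => F (pt3 q.1.1 q.1.2 q.2) :=
    ((hgrad_cont.comp continuous_pt3).norm.pow 2)
  have hAK : A ⊆ (Icc 0 T₁ ×ˢ Icc 0 T₂) ×ˢ Icc (-C) C := by
    rintro ⟨t, s⟩ ⟨htU, hs1, hs2⟩
    have htB : t ∈ B := hUB htU
    have h1 := abs_le.mp (by simpa [Real.norm_eq_abs] using hCg t htB)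
    have h2 := abs_le.mp (by simpa [Real.norm_eq_abs] using hCG t htB)
    refine ⟨by rw [hB] at htB; exact htB, ?_, ?_⟩
    · linarith [h1.1]
    · linarith [h2.2]
  have hFA : IntegrableOn (fun q : (ℝ × ℝ) × ℝ => F (pt3 q.1.1 q.1.2 q.2)) A :=
    ((hFcont.continuousOn).integrableOn_compact
      (((isCompact_Icc.prod isCompact_Icc).prod isCompact_Icc))).mono_set hAK
  set H : (ℝ × ℝ) × ℝ → ℝ := A.indicator (fun q => F (pt3 q.1.1 q.1.2 q.2)) with hH
  have hH_int : Integrable H := (integrable_indicator_iff hA_meas).2 hFA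
  have hH_nonneg : ∀ q, 0 ≤ H q :=
    fun q => indicator_nonneg (fun p _ => by simp only [hF]; positivity) q
  set W : ℝ × ℝ → ℝ := fun t => ∫ s, H (t, s) with hW
  have hW_int : Integrable W := by
    have h := hH_int
    rw [Measure.volume_eq_prod _ _] at h
    exact h.integral_prod_left
  have hW_nonneg : ∀ t, 0 ≤ W t := fun t => integral_nonneg fun s => hH_nonneg _
  -- Fubini
  have hWS : ∫ t, W t = ∫ x in S, F x := by
    have hint : Integrable (Function.uncurry fun t s => H (t, s))
        ((volume : Measure (ℝ × ℝ)).prod (volume : Measure ℝ)) := by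
      rw [← Measure.volume_eq_prod _ _]
      exact hH_int
    have h2 := integral_integral hint
    rw [← Measure.volume_eq_prod _ _] at h2
    have h3 : ∫ z : (ℝ × ℝ) × ℝ, H (z.1, z.2) = ∫ q, H q := by simp
    rw [h3] at h2
    rw [show (∫ t, W t) = ∫ t, ∫ s, H (t, s) from rfl, h2, hH,
      integral_indicator hA_meas, ← hpre,
      ← e3_mp_symm.setIntegral_preimage_emb e3.symm.measurableEmbedding F S]
    exact setIntegral_congr_fun (show MeasurableSet (⇑e3.symm ⁻¹' S) from hpre ▸ hA_meas)
      fun q _ => by rw [e3_symm_apply]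
  -- pointwise estimate on U
  have key : ∀ t ∈ U, (ψ (pt3 t.1 t.2 (g t)))^2
      ≤ 2*(ψ (pt3 t.1 t.2 (G t)))^2 + 2*γ*W t := by
    intro t htU
    have htB : t ∈ B := hUB htU
    obtain ⟨hle, hγle⟩ := hgG t htB
    have hDt : Continuous fun s => D t s := hDcont.comp (Continuous.prodMk_right t)
    have hftc : ∫ s in (g t)..(G t), D t s
        = ψ (pt3 t.1 t.2 (G t)) - ψ (pt3 t.1 t.2 (g t)) :=
      intervalIntegral.integral_eq_sub_of_hasDerivAt (fun s _ => hDderiv t s)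
        (hDt.intervalIntegrable _ _)
    have hioo : ∫ s in (g t)..(G t), D t s = ∫ s in Ioo (g t) (G t), D t s := by
      rw [intervalIntegral.integral_of_le hle, integral_Ioc_eq_integral_Ioo]
    have hcs := cs_aux hle hDt
    have hQ0 : (0:ℝ) ≤ ∫ s in Ioo (g t) (G t), (D t s)^2 :=
      integral_nonneg fun s => sq_nonneg _
    have hmono : (∫ s in Ioo (g t) (G t), (D t s)^2)
        ≤ ∫ s in Ioo (g t) (G t), F (pt3 t.1 t.2 s) := by
      refine setIntegral_mono_on ?_ ?_ measurableSet_Ioo fun s _ => hD_le t s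
      · exact ((hDt.pow 2).integrableOn_Icc (a := g t) (b := G t)).mono_set
          Ioo_subset_Icc_self
      · exact (((hFcont.comp (Continuous.prodMk_right t)).integrableOn_Icc
          (a := g t) (b := G t))).mono_set Ioo_subset_Icc_self
    have hWt : W t = ∫ s in Ioo (g t) (G t), F (pt3 t.1 t.2 s) := by
      have hfun : (fun s => H (t, s))
          = (Ioo (g t) (G t)).indicator (fun s => F (pt3 t.1 t.2 s)) := by
        funext s
        have hmem : ((t, s) ∈ A) ↔ s ∈ Ioo (g t) (G t) := by simp [hA, htU]
        simp only [hH, Set.indicator_apply, hmem]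
      simp only [hW]
      rw [hfun, integral_indicator measurableSet_Ioo]
    set a := ψ (pt3 t.1 t.2 (g t)) with ha
    set b := ψ (pt3 t.1 t.2 (G t)) with hb
    set Jv := ∫ s in Ioo (g t) (G t), D t s with hI
    set Qv := ∫ s in Ioo (g t) (G t), (D t s)^2 with hQv
    have hba : b - a = Jv := by rw [← hftc, hioo]
    have h5 : Jv^2 ≤ γ * Qv :=
      le_trans hcs (mul_le_mul_of_nonneg_right (by linarith) hQ0)
    have h6 : γ * Qv ≤ γ * W t :=
      mul_le_mul_of_nonneg_left (le_trans hmono (le_of_eq hWt.symm)) hγ.le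
    have h7 : (a - b)^2 = Jv^2 := by rw [← hba]; ring
    nlinarith [sq_nonneg (a - 2*b)]
  -- integrability of the boundary terms
  have hptg : ContinuousOn (fun t : ℝ × ℝ => pt3 t.1 t.2 (g t)) B := by
    simp only [pt3_smul]
    exact ((continuous_fst.continuousOn.smul continuousOn_const).add
      (continuous_snd.continuousOn.smul continuousOn_const)).add (hg.smul continuousOn_const)
  have hptG : ContinuousOn (fun t : ℝ × ℝ => pt3 t.1 t.2 (G t)) B := by
    simp only [pt3_smul]
    exact ((continuous_fst.continuousOn.smul continuousOn_const).add
      (continuous_snd.continuousOn.smul continuousOn_const)).add (hG.smul continuousOn_const)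
  have hIg : IntegrableOn (fun t : ℝ × ℝ => (ψ (pt3 t.1 t.2 (g t)))^2) B :=
    ((hψ.continuous.comp_continuousOn hptg).pow 2).integrableOn_compact hBcompact
  have hIG : IntegrableOn (fun t : ℝ × ℝ => (ψ (pt3 t.1 t.2 (G t)))^2) B :=
    ((hψ.continuous.comp_continuousOn hptG).pow 2).integrableOn_compact hBcompact
  -- assembling
  have hUmeas : MeasurableSet U := hUopen.measurableSet
  have hBUg : ∫ t in B, (ψ (pt3 t.1 t.2 (g t)))^2 = ∫ t in U, (ψ (pt3 t.1 t.2 (g t)))^2 :=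
    setIntegral_congr_set hBU_ae
  have hBUG : ∫ t in B, (ψ (pt3 t.1 t.2 (G t)))^2 = ∫ t in U, (ψ (pt3 t.1 t.2 (G t)))^2 :=
    setIntegral_congr_set hBU_ae
  have hRHS1 : IntegrableOn (fun t => 2*(ψ (pt3 t.1 t.2 (G t)))^2) U :=
    (hIG.mono_set hUB).const_mul 2
  have hRHS2 : IntegrableOn (fun t => 2*γ*W t) U :=
    (hW_int.integrableOn).const_mul (2*γ)
  have step1 : ∫ t in U, (ψ (pt3 t.1 t.2 (g t)))^2
      ≤ ∫ t in U, (2*(ψ (pt3 t.1 t.2 (G t)))^2 + 2*γ*W t) :=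
    setIntegral_mono_on (hIg.mono_set hUB) (hRHS1.add hRHS2) hUmeas key
  have step2 : ∫ t in U, (2*(ψ (pt3 t.1 t.2 (G t)))^2 + 2*γ*W t)
      = 2*(∫ t in U, (ψ (pt3 t.1 t.2 (G t)))^2) + 2*γ*∫ t in U, W t := by
    rw [integral_add hRHS1 hRHS2, integral_const_mul, integral_const_mul]
  have step3 : ∫ t in U, W t ≤ ∫ t, W t :=
    setIntegral_le_integral hW_int (ae_of_all _ fun t => hW_nonneg t)
  have step4 : 2*γ*∫ t in U, W t ≤ 2*γ*∫ x in S, F x := by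
    rw [← hWS]
    exact mul_le_mul_of_nonneg_left step3 (by positivity)
  calc ∫ t in B, (ψ (pt3 t.1 t.2 (g t)))^2
      = ∫ t in U, (ψ (pt3 t.1 t.2 (g t)))^2 := hBUg
    _ ≤ ∫ t in U, (2*(ψ (pt3 t.1 t.2 (G t)))^2 + 2*γ*W t) := step1
    _ = 2*(∫ t in U, (ψ (pt3 t.1 t.2 (G t)))^2) + 2*γ*∫ t in U, W t := step2
    _ ≤ 2*(∫ t in U, (ψ (pt3 t.1 t.2 (G t)))^2) + 2*γ*∫ x in S, F x := by linarith
    _ = 2*(∫ t in B, (ψ (pt3 t.1 t.2 (G t)))^2) + 2*γ*∫ x in S, F x := by rw [hBUG]
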